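/- arXiv:2307.14840 — 3 statements merged into one kernel-verified Lean document; each statement's English description precedes it below -/
import Mathlib

section
/- Let n and k be natural numbers with 1 ≤ k and 2k < n. Then n! / (n^k · (n−k)!) > e^{−2k²/n}, where the left-hand side and right-hand side are compared as real numbers. -/
open Finset

lemma aux_exp_le (x : ℝ) (h0 : 0 ≤ x) (h1 : x ≤ 1/2) : Real.exp (-2*x) ≤ 1 - x := by
  have h2 : (1:ℝ) + 2*x ≤ Real.exp (2*x) := by
    have := Real.add_one_le_exp (2*x); linarith
  have hpos : (0:ℝ) < 1 + 2*x := by linarith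
  have hinv : Real.exp (-2*x) = (Real.exp (2*x))⁻¹ := by
    rw [← Real.exp_neg]; ring_nf
  rw [hinv]
  have h3 : (Real.exp (2*x))⁻¹ ≤ (1+2*x)⁻¹ := by
    apply inv_anti₀ hpos h2
  have h5 : (1+2*x)⁻¹ * (1+2*x) = 1 := inv_mul_cancel₀ hpos.ne'
  nlinarith [h3, h5, sq_nonneg x, inv_pos.mpr hpos]

/-- For naturals `n, k` with `1 ≤ k` and `2k < n`, we have
`n! / (n^k · (n−k)!) > e^{−2k²/n}` as real numbers. -/
theorem factorial_ratio_gt_exp (n k : ℕ) (hk : 1 ≤ k) (hkn : 2 * k < n) :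
    (Nat.factorial n : ℝ) / ((n : ℝ) ^ k * (Nat.factorial (n - k) : ℝ)) >
      Real.exp (-(2 * (k : ℝ) ^ 2) / (n : ℝ)) := by
  have hn : 0 < n := by omega
  have hkn' : k ≤ n := by omega
  have hnR : (0:ℝ) < n := by exact_mod_cast hn
  have hfac : (Nat.factorial (n - k)) * Nat.descFactorial n k = Nat.factorial n :=
    Nat.factorial_mul_descFactorial hkn'
  have hc : ((Nat.descFactorial n k : ℕ) : ℝ) = ∏ i ∈ range k, ((n:ℝ) - i) := by
    rw [Nat.descFactorial_eq_prod_range, Nat.cast_prod]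
    refine Finset.prod_congr rfl fun i hi => ?_
    have hi' : i ≤ n := by have := mem_range.mp hi; omega
    exact Nat.cast_sub hi'
  have hprod : (Nat.factorial n : ℝ) / ((n : ℝ) ^ k * (Nat.factorial (n - k) : ℝ))
      = ∏ i ∈ range k, (((n:ℝ) - i)/n) := by
    rw [← hfac]
    push_cast [hc]
    rw [Finset.prod_div_distrib, Finset.prod_const, Finset.card_range]
    have hfne : (Nat.factorial (n-k) : ℝ) ≠ 0 := by
      exact_mod_cast (Nat.factorial_pos (n-k)).ne'
    field_simp
  rw [hprod]
  have h1 : Real.exp (-(2*(k:ℝ)^2)/n) < Real.exp (∑ i ∈ range k, (-2*(i:ℝ)/n)) := by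
    apply Real.exp_lt_exp.mpr
    have hS : ((∑ i ∈ range k, i : ℕ) : ℝ) * 2 = (k:ℝ) * ((k:ℝ) - 1) := by
      have := Finset.sum_range_id_mul_two k
      have : ((∑ i ∈ range k, i) * 2 : ℕ) = k * (k-1) := this
      have hcast : (((∑ i ∈ range k, i) * 2 : ℕ) : ℝ) = ((k * (k-1) : ℕ) : ℝ) := by
        exact_mod_cast this
      push_cast [Nat.cast_sub hk] at hcast
      push_cast
      linarith
    have hsum : ∑ i ∈ range k, (-2*(i:ℝ)/n) = ((∑ i ∈ range k, i : ℕ) : ℝ) * (-2/n) := by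
      push_cast
      rw [Finset.sum_mul]
      refine Finset.sum_congr rfl fun i _ => by ring
    rw [hsum]
    have hkR : (1:ℝ) ≤ k := by exact_mod_cast hk
    have heq : ((∑ i ∈ range k, i : ℕ) : ℝ) * (-2/n) = (-((k:ℝ)*((k:ℝ)-1)))/n := by
      have hS2 : ((∑ i ∈ range k, i : ℕ) : ℝ) = (k:ℝ)*((k:ℝ)-1)/2 := by linarith
      rw [hS2]; ring
    rw [heq, div_lt_div_iff₀ hnR hnR]
    nlinarith [hkR, hnR]
  refine lt_of_lt_of_le h1 ?_
  rw [Real.exp_sum]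
  apply Finset.prod_le_prod
  · intro i _; exact (Real.exp_pos _).le
  · intro i hi
    have hik : i < k := mem_range.mp hi
    have hiR : (0:ℝ) ≤ i := by positivity
    have h2i : 2 * (i:ℝ) ≤ n := by
      have : 2 * i ≤ n := by omega
      exact_mod_cast this
    have hx0 : 0 ≤ (i:ℝ)/n := by positivity
    have hx1 : (i:ℝ)/n ≤ 1/2 := by
      rw [div_le_div_iff₀ hnR (by norm_num)]
      linarith
    have := aux_exp_le ((i:ℝ)/n) hx0 hx1
    have heq : -2*((i:ℝ)/n) = -2*(i:ℝ)/n := by ring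
    have heq2 : 1 - (i:ℝ)/n = ((n:ℝ) - i)/n := by field_simp
    rw [heq] at this
    rw [heq2] at this
    exact this
end

section
/- Let n and k be natural numbers with k ≤ n, and let y be any n-factoradic. Then the n-bit string A_k(y) has Hamming weight exactly k. -/
/-- `akWeight k n y t` is the number of ones among the first `t` produced bits of the
string `A_k(y)`, i.e. among the bits at positions `n−1, n−2, …, n−t` (produced from
left to right).  At step `t` the bit produced (at position `n−1−t`) is `1` iff
`y (n−1−t) < k − (current weight)`. -/
def akWeight (k n : ℕ) (y : ℕ → ℕ) : ℕ → ℕ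
  | 0 => 0
  | t + 1 =>
    akWeight k n y t + (if y (n - 1 - t) < k - akWeight k n y t then 1 else 0)

/-- The bit of `A_k(y)` at position `p` (for `p < n`): letting `H_p = akWeight k n y (n−1−p)`
be the number of ones among the already-produced bits at positions `> p`, the bit is `1`
iff `y p < k − H_p`. -/
def akBit (k n : ℕ) (y : ℕ → ℕ) (p : ℕ) : Bool :=
  decide (y p < k - akWeight k n y (n - 1 - p))

lemma akWeight_le (k n : ℕ) (y : ℕ → ℕ) : ∀ t, akWeight k n y t ≤ k := by
  intro t
  induction t with
  | zero => simp [akWeight]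
  | succ t ih =>
    simp only [akWeight]
    split_ifs with h
    · omega
    · omega

lemma akWeight_ge (n k : ℕ) (hkn : k ≤ n) (y : ℕ → ℕ) (hy : ∀ j < n, y j ≤ j) :
    ∀ t ≤ n, k ≤ akWeight k n y t + (n - t) := by
  intro t
  induction t with
  | zero => simp [akWeight]; omega
  | succ t ih =>
    intro ht
    have ih' := ih (by omega)
    have hyle : y (n - 1 - t) ≤ n - 1 - t := hy _ (by omega)
    simp only [akWeight]
    split_ifs with h
    · omega
    · omega

lemma akWeight_card (n k : ℕ) (y : ℕ → ℕ) :
    ∀ t ≤ n, ((Finset.Ico (n - t) n).filter (fun p => akBit k n y p = true)).card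
      = akWeight k n y t := by
  intro t
  induction t with
  | zero => simp [akWeight]
  | succ t ih =>
    intro ht
    have ih' := ih (by omega)
    have hset : Finset.Ico (n - (t + 1)) n = insert (n - 1 - t) (Finset.Ico (n - t) n) := by
      ext p
      simp only [Finset.mem_Ico, Finset.mem_insert]
      omega
    rw [hset, Finset.filter_insert]
    have hb : akBit k n y (n - 1 - t) = decide (y (n - 1 - t) < k - akWeight k n y t) := by
      have ht' : n - 1 - (n - 1 - t) = t := by omega
      unfold akBit
      rw [ht']
    have hnotmem : n - 1 - t ∉ Finset.Ico (n - t) n := by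
      simp; omega
    simp only [akWeight]
    by_cases hc : y (n - 1 - t) < k - akWeight k n y t
    · rw [if_pos (by simp [hb, hc]), Finset.card_insert_of_notMem
        (fun hm => hnotmem (Finset.mem_of_mem_filter _ hm)), ih', if_pos hc]
    · rw [if_neg (by simp [hb, hc]), ih', if_neg hc]
      omega

/-- For `k ≤ n` and any `n`-factoradic `y` (a sequence with `y j ≤ j` for all `j < n`),
the `n`-bit string `A_k(y)` has Hamming weight exactly `k`. -/
theorem ak_hammingWeight (n k : ℕ) (hkn : k ≤ n) (y : ℕ → ℕ)
    (hy : ∀ j < n, y j ≤ j) :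
    ((Finset.range n).filter (fun p => akBit k n y p = true)).card = k := by
  have h1 := akWeight_card n k y n le_rfl
  have h2 := akWeight_le k n y n
  have h3 := akWeight_ge n k hkn y hy n le_rfl
  rw [Finset.range_eq_Ico]
  have : n - n = 0 := by omega
  rw [this] at h1
  omega
end

section
/- Let n and k be natural numbers with k ≤ n, and let s be any n-bit string of Hamming weight k. Then the number of n-factoradics y with A_k(y) = s equals exactly k! · (n−k)!. -/
/-- An `n`-factoradic: a sequence `(y_{n-1}, …, y_0)` with `0 ≤ y_j ≤ j`, modeled as a
dependent function assigning to each `j : Fin n` an element of `Fin (j+1)`. -/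
def Factoradic (n : ℕ) : Type := ∀ j : Fin n, Fin (j.val + 1)

instance (n : ℕ) : Fintype (Factoradic n) := by unfold Factoradic; infer_instance
instance (n : ℕ) : DecidableEq (Factoradic n) := by unfold Factoradic; infer_instance

/-- The value `y_j` of a factoradic at position `j` (and `0` for out-of-range `j`). -/
def factVal {n : ℕ} (y : Factoradic n) (j : ℕ) : ℕ :=
  if h : j < n then (y ⟨j, h⟩).val else 0

/-- The `n`-bit string `A_k(y)` produced from an `n`-factoradic `y`. -/
def ak (n k : ℕ) (y : Factoradic n) : Fin n → Bool :=
  fun p => akBit k n (factVal y) p.val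

/-! ### Auxiliary counting machinery -/

/-- `cnt sN a n` is the number of ones of `sN` in positions `a, …, n-1`. -/
private def cnt (sN : ℕ → Bool) (a n : ℕ) : ℕ :=
  ((Finset.Ico a n).filter (fun p => sN p = true)).card

private lemma cnt_succ (sN : ℕ → Bool) (a n : ℕ) (h : a < n) :
    cnt sN a n = cnt sN (a + 1) n + (if sN a = true then 1 else 0) := by
  unfold cnt
  rw [show Finset.Ico a n = insert a (Finset.Ico (a + 1) n) from
    (Finset.insert_Ico_add_one_left_eq_Ico h).symm, Finset.filter_insert]
  split
  · rw [Finset.card_insert_of_notMem (by simp [Finset.mem_Ico])]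
  · omega

private lemma cnt_split (sN : ℕ → Bool) (a b c : ℕ) (hab : a ≤ b) (hbc : b ≤ c) :
    cnt sN a c = cnt sN a b + cnt sN b c := by
  unfold cnt
  rw [← Finset.Ico_union_Ico_eq_Ico hab hbc, Finset.filter_union,
    Finset.card_union_of_disjoint]
  exact Finset.disjoint_filter_filter (Finset.Ico_disjoint_Ico_consecutive a b c)

private lemma cnt_le (sN : ℕ → Bool) (a n : ℕ) : cnt sN a n ≤ n - a := by
  calc cnt sN a n ≤ (Finset.Ico a n).card := Finset.card_filter_le _ _
    _ = n - a := Nat.card_Ico a n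

/-- The key product identity : the product of the per-position choice counts equals
`k! (n-k)!`. -/
private lemma prod_counts (sN : ℕ → Bool) :
    ∀ n k : ℕ, k ≤ n → cnt sN 0 n = k →
    (∏ j ∈ Finset.range n,
      (if sN j = true then k - cnt sN (j + 1) n else j + 1 - (k - cnt sN (j + 1) n)))
      = k.factorial * (n - k).factorial := by
  intro n
  induction n with
  | zero =>
    intro k hk _
    interval_cases k
    simp [Nat.factorial]
  | succ n ih =>
    intro k hk h0
    have hcnt_top : cnt sN (n + 1) (n + 1) = 0 := by unfold cnt; simp
    have hsplit : ∀ a, a ≤ n →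
        cnt sN a (n + 1) = cnt sN a n + (if sN n = true then 1 else 0) := by
      intro a ha
      rw [cnt_split sN a n (n + 1) ha (by omega)]
      congr 1
      rw [cnt_succ sN n (n + 1) (by omega), hcnt_top]
      omega
    set e : ℕ := if sN n = true then 1 else 0 with he
    have he1 : e ≤ 1 := by rw [he]; split <;> omega
    have h0n : cnt sN 0 n + e = k := by rw [← hsplit 0 (by omega)]; exact h0
    have hkn : cnt sN 0 n ≤ n := by have := cnt_le sN 0 n; omega
    have hek : e ≤ k := by omega
    set k' : ℕ := k - e with hk'
    have h0' : cnt sN 0 n = k' := by omega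
    have hk'n : k' ≤ n := by omega
    rw [Finset.prod_range_succ]
    have hprod : (∏ j ∈ Finset.range n,
        (if sN j = true then k - cnt sN (j + 1) (n + 1)
          else j + 1 - (k - cnt sN (j + 1) (n + 1))))
        = ∏ j ∈ Finset.range n,
        (if sN j = true then k' - cnt sN (j + 1) n
          else j + 1 - (k' - cnt sN (j + 1) n)) := by
      apply Finset.prod_congr rfl
      intro j hj
      have hj' : j < n := Finset.mem_range.mp hj
      rw [hsplit (j + 1) (by omega)]
      have hx : k - (cnt sN (j + 1) n + e) = k' - cnt sN (j + 1) n := by omega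
      rw [hx]
    rw [hprod, ih k' hk'n h0', hcnt_top]
    by_cases hb : sN n = true
    · have he' : e = 1 := by rw [he]; simp [hb]
      have hk1 : 1 ≤ k := by omega
      have hkk : k' = k - 1 := by omega
      have h1 : n - k' = n + 1 - k := by omega
      simp only [hb, if_true, Nat.sub_zero, h1, hkk]
      rw [← Nat.mul_factorial_pred (by omega : k ≠ 0)]
      have h2 : n - (k - 1) = n + 1 - k := by omega
      rw [h2]
      ring
    · have he' : e = 0 := by rw [he]; simp [hb]
      have hkk : k' = k := by omega
      rw [if_neg hb, Nat.sub_zero, hkk]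
      have h1 : n + 1 - k = (n - k) + 1 := by omega
      rw [h1, Nat.factorial_succ]
      ring

/-! ### The weight of the prefix of `A_k(y)` matches the target string -/

private lemma akWeight_eq (n k : ℕ) (y : Factoradic n) (sN : ℕ → Bool) :
    ∀ t, t ≤ n →
    (∀ q, n - t ≤ q → q < n → (factVal y q < k - cnt sN (q + 1) n ↔ sN q = true)) →
    akWeight k n (factVal y) t = cnt sN (n - t) n := by
  intro t
  induction t with
  | zero =>
    intro _ _
    show 0 = cnt sN (n - 0) n
    unfold cnt; simp
  | succ t ih =>
    intro ht h
    have hw : akWeight k n (factVal y) t = cnt sN (n - t) n :=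
      ih (by omega) (fun q hq1 hq2 => h q (by omega) hq2)
    show akWeight k n (factVal y) t
        + (if factVal y (n - 1 - t) < k - akWeight k n (factVal y) t then 1 else 0)
        = cnt sN (n - (t + 1)) n
    rw [hw]
    have hp : n - 1 - t = n - (t + 1) := by omega
    have hq : n - (t + 1) + 1 = n - t := by omega
    have hcond := h (n - (t + 1)) (le_refl _) (by omega)
    rw [hq] at hcond
    rw [hp]
    rw [cnt_succ sN (n - (t + 1)) n (by omega), hq]
    by_cases hb : sN (n - (t + 1)) = true
    · have hlt : factVal y (n - (t + 1)) < k - cnt sN (n - t) n := hcond.mpr hb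
      simp [hlt, hb]
    · have hnlt : ¬ factVal y (n - (t + 1)) < k - cnt sN (n - t) n :=
        fun hlt => hb (hcond.mp hlt)
      simp [hnlt, hb]

/-! ### Characterization of the fiber -/

private lemma static_of_ak (n k : ℕ) (y : Factoradic n) (s : Fin n → Bool)
    (sN : ℕ → Bool) (hsN : ∀ q : Fin n, sN q.val = s q) (hak : ak n k y = s) :
    ∀ q, q < n → (factVal y q < k - cnt sN (q + 1) n ↔ sN q = true) := by
  suffices h : ∀ t, t ≤ n → ∀ q, n - t ≤ q → q < n →
      (factVal y q < k - cnt sN (q + 1) n ↔ sN q = true) by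
    intro q hq
    exact h n le_rfl q (by omega) hq
  intro t
  induction t with
  | zero =>
    intro _ q hq1 hq2
    omega
  | succ t ih =>
    intro ht q hq1 hq2
    by_cases hcase : n - t ≤ q
    · exact ih (by omega) q hcase hq2
    · have hqe : q = n - (t + 1) := by omega
      subst hqe
      have htn : t < n := by omega
      have hW := akWeight_eq n k y sN t (by omega)
        (fun r hr1 hr2 => ih (by omega) r hr1 hr2)
      have hb : ak n k y ⟨n - (t + 1), by omega⟩ = s ⟨n - (t + 1), by omega⟩ := by
        rw [hak]
      unfold ak akBit at hb
      replace hb : decide (factVal y (n - (t + 1)) <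
          k - akWeight k n (factVal y) (n - 1 - (n - (t + 1))))
          = s ⟨n - (t + 1), by omega⟩ := hb
      have h1 : n - 1 - (n - (t + 1)) = t := by omega
      rw [h1, hW] at hb
      have h2 : n - (t + 1) + 1 = n - t := by omega
      rw [h2]
      have hsq := hsN ⟨n - (t + 1), by omega⟩
      replace hsq : sN (n - (t + 1)) = s ⟨n - (t + 1), by omega⟩ := hsq
      rw [← hsq] at hb
      rw [← hb]
      simp

private lemma ak_of_static (n k : ℕ) (y : Factoradic n) (s : Fin n → Bool)
    (sN : ℕ → Bool) (hsN : ∀ q : Fin n, sN q.val = s q)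
    (hst : ∀ q, q < n → (factVal y q < k - cnt sN (q + 1) n ↔ sN q = true)) :
    ak n k y = s := by
  funext p
  unfold ak akBit
  have hW := akWeight_eq n k y sN (n - 1 - p.val) (by omega)
    (fun q hq1 hq2 => hst q hq2)
  have h1 : n - (n - 1 - p.val) = p.val + 1 := by have := p.isLt; omega
  rw [hW, h1]
  have hc := hst p.val p.isLt
  rw [← hsN p]
  by_cases hb : sN p.val = true
  · simp [hc.mpr hb, hb]
  · have h3 : ¬ factVal y p.val < k - cnt sN (p.val + 1) n := fun h => hb (hc.mp h)
    rw [Bool.not_eq_true] at hb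
    simp [h3, hb]

private lemma ak_eq_iff (n k : ℕ) (y : Factoradic n) (s : Fin n → Bool)
    (sN : ℕ → Bool) (hsN : ∀ q : Fin n, sN q.val = s q) :
    ak n k y = s ↔
      ∀ j : Fin n, ((y j).val < k - cnt sN (j.val + 1) n ↔ s j = true) := by
  have hfv : ∀ j : Fin n, factVal y j.val = (y j).val := by
    intro j
    simp [factVal, j.isLt]
  constructor
  · intro hak j
    have := static_of_ak n k y s sN hsN hak j.val j.isLt
    rw [hfv j, hsN j] at this
    exact this
  · intro hst
    apply ak_of_static n k y s sN hsN
    intro q hq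
    have := hst ⟨q, hq⟩
    rw [← hfv ⟨q, hq⟩, ← hsN ⟨q, hq⟩] at this
    exact this

/-! ### Cardinality of simple filters on `Fin N` -/

private lemma card_filter_lt (N m : ℕ) :
    (Finset.univ.filter (fun x : Fin N => x.val < m)).card = min N m := by
  rw [Finset.card_filter]
  rw [Fin.sum_univ_eq_sum_range (fun j => if j < m then 1 else 0) N]
  rw [← Finset.card_filter]
  rw [show (Finset.range N).filter (fun j => j < m) = Finset.range (min N m) by
    ext j; simp [Nat.lt_min]]
  simp

private lemma card_filter_not_lt (N m : ℕ) :
    (Finset.univ.filter (fun x : Fin N => ¬ x.val < m)).card = N - min N m := by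
  rw [Finset.filter_not, Finset.card_sdiff_of_subset (Finset.filter_subset _ _),
    card_filter_lt, Finset.card_univ, Fintype.card_fin]

/-- For `k ≤ n` and any `n`-bit string `s` of Hamming weight `k`, the number of
`n`-factoradics `y` with `A_k(y) = s` is exactly `k! · (n−k)!`. -/
theorem ak_fiber_card (n k : ℕ) (hkn : k ≤ n) (s : Fin n → Bool)
    (hs : (Finset.univ.filter (fun p => s p = true)).card = k) :
    (Finset.univ.filter (fun y : Factoradic n => ak n k y = s)).card =
      Nat.factorial k * Nat.factorial (n - k) := by
  set sN : ℕ → Bool := fun q => if h : q < n then s ⟨q, h⟩ else false with hsNdef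
  have hsN : ∀ q : Fin n, sN q.val = s q := by
    intro q
    simp [hsNdef, q.isLt]
  -- total count of ones
  have hs' : cnt sN 0 n = k := by
    unfold cnt
    rw [Nat.Ico_zero_eq_range, Finset.card_filter]
    rw [← hs, Finset.card_filter]
    rw [← Fin.sum_univ_eq_sum_range (fun j => if sN j = true then 1 else 0) n]
    apply Finset.sum_congr rfl
    intro j _
    rw [hsN j]
  -- bound on the number of remaining ones
  have hbound : ∀ j : Fin n, k - cnt sN (j.val + 1) n ≤ j.val + 1 := by
    intro j
    have h1 := cnt_split sN 0 (j.val + 1) n (by omega) (by omega)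
    have h2 := cnt_le sN 0 (j.val + 1)
    omega
  -- rewrite the fiber as an independent product condition
  have hset : (Finset.univ.filter (fun y : Factoradic n => ak n k y = s))
      = Finset.univ.filter
        (fun y : Factoradic n =>
          ∀ j : Fin n, ((y j).val < k - cnt sN (j.val + 1) n ↔ s j = true)) := by
    ext y
    simp only [Finset.mem_filter, Finset.mem_univ, true_and]
    exact ak_eq_iff n k y s sN hsN
  rw [hset]
  -- count via product over coordinates
  have hcard : (Finset.univ.filter
      (fun y : Factoradic n =>
        ∀ j : Fin n, ((y j).val < k - cnt sN (j.val + 1) n ↔ s j = true))).card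
      = ∏ j : Fin n,
        (Finset.univ.filter
          (fun x : Fin (j.val + 1) =>
            (x.val < k - cnt sN (j.val + 1) n ↔ s j = true))).card := by
    calc (Finset.univ.filter
        (fun y : Factoradic n =>
          ∀ j : Fin n, ((y j).val < k - cnt sN (j.val + 1) n ↔ s j = true))).card
        = Fintype.card {y : Factoradic n //
            ∀ j : Fin n, ((y j).val < k - cnt sN (j.val + 1) n ↔ s j = true)} :=
          (Fintype.card_subtype _).symm
      _ = Fintype.card (∀ j : Fin n,
            {x : Fin (j.val + 1) // x.val < k - cnt sN (j.val + 1) n ↔ s j = true}) :=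
          Fintype.card_congr (Equiv.subtypePiEquivPi
            (p := fun (j : Fin n) (x : Fin (j.val + 1)) =>
              x.val < k - cnt sN (j.val + 1) n ↔ s j = true))
      _ = ∏ j : Fin n, Fintype.card
            {x : Fin (j.val + 1) // x.val < k - cnt sN (j.val + 1) n ↔ s j = true} :=
          Fintype.card_pi
      _ = ∏ j : Fin n,
          (Finset.univ.filter
            (fun x : Fin (j.val + 1) =>
              (x.val < k - cnt sN (j.val + 1) n ↔ s j = true))).card :=
          Finset.prod_congr rfl (fun j _ => Fintype.card_subtype _)
  rw [hcard]
  -- compute each factor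
  have hfac : ∀ j : Fin n,
      (Finset.univ.filter
        (fun x : Fin (j.val + 1) =>
          (x.val < k - cnt sN (j.val + 1) n ↔ s j = true))).card
      = (if sN j.val = true then k - cnt sN (j.val + 1) n
          else j.val + 1 - (k - cnt sN (j.val + 1) n)) := by
    intro j
    rw [← hsN j]
    by_cases hb : sN j.val = true
    · rw [if_pos hb]
      rw [show (Finset.univ.filter
          (fun x : Fin (j.val + 1) =>
            (x.val < k - cnt sN (j.val + 1) n ↔ sN j.val = true)))
          = (Finset.univ.filter
            (fun x : Fin (j.val + 1) => x.val < k - cnt sN (j.val + 1) n)) by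
        apply Finset.filter_congr; intro x _; simp [hb]]
      rw [card_filter_lt]
      exact min_eq_right (hbound j)
    · rw [if_neg hb]
      rw [show (Finset.univ.filter
          (fun x : Fin (j.val + 1) =>
            (x.val < k - cnt sN (j.val + 1) n ↔ sN j.val = true)))
          = (Finset.univ.filter
            (fun x : Fin (j.val + 1) => ¬ x.val < k - cnt sN (j.val + 1) n)) by
        apply Finset.filter_congr; intro x _; simp [hb]]
      rw [card_filter_not_lt, min_eq_right (hbound j)]
  rw [Finset.prod_congr rfl (fun j _ => hfac j)]
  rw [Fin.prod_univ_eq_prod_range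
    (fun i => if sN i = true then k - cnt sN (i + 1) n
      else i + 1 - (k - cnt sN (i + 1) n)) n]
  exact prod_counts sN n k hkn hs'
end
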